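/- arXiv:1207.0466 — 14 statements merged into one kernel-verified Lean document; each statement's English description precedes it below -/
import Mathlib

section
/- Let R be a ring with involution *. If every element of R is the sum of a projection (an element e with e² = e = e*) and an element of the Jacobson radical that commute with each other, then every element of R is the sum of a projection and a unit that commute with each other. -/
/-!
If `a = e + u` with `e` a projection commuting with `a` and `u` in the Jacobson radical, then
`a = (1 - e) + ((2e - 1) + u)`: `1 - e` is again a projection commuting with `a`, and
`(2e - 1) + u` is a unit because `2e - 1` is a symmetry (`(2e - 1)² = 1`) and a unit
plus an element of the Jacobson radical is a unit.
-/

/-- A *-ring `R` is strongly J-*-clean if every element is the sum of a projection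
and an element of the Jacobson radical that commute. -/
def StronglyJStarClean (R : Type*) [Ring R] [StarRing R] : Prop :=
  ∀ a : R, ∃ e u : R, e * e = e ∧ star e = e ∧
    u ∈ Ideal.jacobson (⊥ : Ideal R) ∧ a = e + u ∧ a * e = e * a

namespace Ideal

variable {R : Type*} [Ring R]

theorem exists_mul_one_add_eq_one_of_mem_jacobson_bot {x : R} (hx : x ∈ jacobson (⊥ : Ideal R)) :
    ∃ z, z * (1 + x) = 1 := by
  obtain ⟨z, hz⟩ := exists_mul_add_sub_mem_of_mem_jacobson x hx
  rw [mem_bot, sub_eq_zero, add_comm] at hz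
  exact ⟨z, hz⟩

theorem isUnit_one_add_of_mem_jacobson_bot {x : R} (hx : x ∈ jacobson (⊥ : Ideal R)) :
    IsUnit (1 + x) := by
  obtain ⟨z, hz⟩ := exists_mul_one_add_eq_one_of_mem_jacobson_bot hx
  -- `z = 1 - z x` has a left inverse `w` too, which must then agree with its right inverse `1 + x`.
  have hz' : 1 + -(z * x) = z := by rw [← hz]; noncomm_ring
  obtain ⟨w, hw⟩ := exists_mul_one_add_eq_one_of_mem_jacobson_bot
    (neg_mem (mul_mem_left _ z hx))
  rw [hz'] at hw
  have hw_eq : w = 1 + x := left_inv_eq_right_inv hw hz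
  exact ⟨⟨1 + x, z, hw_eq ▸ hw, hz⟩, rfl⟩

theorem _root_.IsUnit.add_mem_jacobson_bot {u v : R} (hu : IsUnit u)
    (hv : v ∈ jacobson (⊥ : Ideal R)) : IsUnit (u + v) := by
  obtain ⟨u, rfl⟩ := hu
  have hfactor : (u : R) + v = u * (1 + ↑u⁻¹ * v) := by
    rw [mul_add, mul_one, Units.mul_inv_cancel_left]
  rw [hfactor]
  exact u.isUnit.mul (isUnit_one_add_of_mem_jacobson_bot (mul_mem_left _ _ hv))

end Ideal

theorem stmt_0 (R : Type*) [Ring R] [StarRing R]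
    (h : StronglyJStarClean R) :
    ∀ a : R, ∃ e v : R, e * e = e ∧ star e = e ∧ IsUnit v ∧ a = e + v ∧ a * e = e * a := by
  intro a
  obtain ⟨e, u, he, hse, hu, hau, hcomm⟩ := h a
  have hp : IsStarProjection e := ⟨he, hse⟩
  have hsymm : IsUnit (2 * e - 1) := Unitary.isUnit_coe (U := ⟨_, hp.two_mul_sub_one_mem_unitary⟩)
  refine ⟨1 - e, 2 * e - 1 + u, hp.one_sub.isIdempotentElem.eq, hp.one_sub.isSelfAdjoint.star_eq,
    hsymm.add_mem_jacobson_bot hu, ?_, (Commute.one_right a).sub_right hcomm⟩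
  rw [hau, two_mul]
  abel
end

section
/- Let R be a strongly J-*-clean ring. Then R is abelian, i.e., every idempotent of R is central. -/
section Ring

variable {R : Type*} [Ring R]

theorem IsIdempotentElem.eq_zero_of_mem_jacobson_bot {e : R} (he : IsIdempotentElem e)
    (hJ : e ∈ Ideal.jacobson (⊥ : Ideal R)) : e = 0 := by
  obtain ⟨s, hs⟩ := Ideal.exists_mul_add_sub_mem_of_mem_jacobson (-e) (neg_mem hJ)
  have hinv : s * (1 - e) = 1 := by
    rw [Ideal.mem_bot, sub_eq_zero, neg_add_eq_sub] at hs
    exact hs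
  calc e = s * ((1 - e) * e) := by rw [← mul_assoc, hinv, one_mul]
    _ = 0 := by rw [he.one_sub_mul_self, mul_zero]

theorem eq_zero_of_mul_mul_self_eq_of_mem_jacobson_bot {w : R} (hw : w * w * w = w)
    (hJ : w ∈ Ideal.jacobson (⊥ : Ideal R)) : w = 0 := by
  have hsq : IsIdempotentElem (w * w) := by
    rw [IsIdempotentElem, ← mul_assoc, hw]
  have hsq0 : w * w = 0 :=
    hsq.eq_zero_of_mem_jacobson_bot (Ideal.mul_mem_left _ w hJ)
  rw [← hw, hsq0, zero_mul]

theorem Commute.sub_mul_self_mul_self_of_isIdempotentElem {e f : R} (hef : Commute e f)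
    (he : IsIdempotentElem e) (hf : IsIdempotentElem f) :
    (e - f) * (e - f) * (e - f) = e - f := by
  have hefe : e * f * e = e * f := by rw [mul_assoc, ← hef.eq, ← mul_assoc, he.eq]
  have heff : e * f * f = e * f := by rw [mul_assoc, hf.eq]
  calc (e - f) * (e - f) * (e - f)
      = e * e * e - e * e * f - e * f * e + e * f * f - f * e * e + f * e * f + f * f * e
          - f * f * f := by noncomm_ring
    _ = e - f := by
      simp only [he.eq, hf.eq, hefe, heff, ← hef.eq]
      abel

theorem IsIdempotentElem.eq_of_commute_of_sub_mem_jacobson_bot {e f : R}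
    (he : IsIdempotentElem e) (hf : IsIdempotentElem f) (hef : Commute e f)
    (hJ : e - f ∈ Ideal.jacobson (⊥ : Ideal R)) : e = f :=
  sub_eq_zero.1 <| eq_zero_of_mul_mul_self_eq_of_mem_jacobson_bot
    (hef.sub_mul_self_mul_self_of_isIdempotentElem he hf) hJ

theorem IsIdempotentElem.add_one_sub_mul_mul {e : R} (he : IsIdempotentElem e) (x : R) :
    IsIdempotentElem (e + (1 - e) * x * e) := by
  have hcross : e * ((1 - e) * x * e) = 0 := by
    rw [← mul_assoc, ← mul_assoc, he.mul_one_sub_self, zero_mul, zero_mul]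
  have hsq : (1 - e) * x * e * ((1 - e) * x * e) = 0 := by
    rw [mul_assoc ((1 - e) * x), mul_assoc (1 - e), hcross, mul_zero, mul_zero]
  have htail : (1 - e) * x * e * e = (1 - e) * x * e := by rw [mul_assoc, he.eq]
  rw [IsIdempotentElem, mul_add, add_mul, add_mul, he.eq, hcross, hsq, htail]
  abel

section StarRing

variable [StarRing R] (hR : ∀ e : R, IsIdempotentElem e → star e = e)
include hR

theorem one_sub_mul_mul_eq_zero_of_forall_isIdempotentElem_star_eq {e : R}
    (he : IsIdempotentElem e) (x : R) : (1 - e) * x * e = 0 := by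
  have hes : star e = e := hR e he
  -- `(1 - e) x e` is self-adjoint, yet left multiplication by `e` kills it and fixes its adjoint.
  have hsa : e * star x * (1 - e) = (1 - e) * x * e := by
    have hg := hR _ (he.add_one_sub_mul_mul x)
    rw [star_add, hes, add_right_inj, star_mul, star_mul, hes, star_sub, star_one, hes,
      ← mul_assoc] at hg
    exact hg
  calc (1 - e) * x * e = e * (e * star x * (1 - e)) := by
        rw [← mul_assoc, ← mul_assoc, he.eq, hsa]
    _ = 0 := by rw [hsa, ← mul_assoc, ← mul_assoc, he.mul_one_sub_self, zero_mul, zero_mul]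

theorem commute_of_forall_isIdempotentElem_star_eq {e : R} (he : IsIdempotentElem e) (x : R) :
    Commute e x := by
  have hright := one_sub_mul_mul_eq_zero_of_forall_isIdempotentElem_star_eq hR he x
  have hleft : e * x * (1 - e) = 0 := by
    simpa only [sub_sub_cancel] using
      one_sub_mul_mul_eq_zero_of_forall_isIdempotentElem_star_eq hR he.one_sub x
  calc e * x = e * x * e := by
        rw [mul_sub, mul_one, sub_eq_zero] at hleft
        exact hleft
    _ = x * e := by
        rw [sub_mul, sub_mul, one_mul, sub_eq_zero] at hright
        exact hright.symm

end StarRing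

end Ring

theorem StronglyJStarClean.star_eq_of_isIdempotentElem {R : Type*} [Ring R] [StarRing R]
    (h : StronglyJStarClean R) {e : R} (he : IsIdempotentElem e) : star e = e := by
  obtain ⟨f, u, hf, hfs, hu, rfl, hcomm⟩ := h e
  have hef : f + u = f :=
    he.eq_of_commute_of_sub_mem_jacobson_bot hf hcomm (by rwa [add_sub_cancel_left])
  rw [hef, hfs]

theorem stmt_1 (R : Type*) [Ring R] [StarRing R] (h : StronglyJStarClean R) :
    ∀ e : R, e * e = e → ∀ x : R, e * x = x * e := fun _ he x =>
  commute_of_forall_isIdempotentElem_star_eq (fun _ => h.star_eq_of_isIdempotentElem) he x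
end

section
/- Let R be a *-ring in which every idempotent is a projection and every element is the sum of an idempotent and an element of the Jacobson radical. Then R is strongly J-*-clean. -/
theorem stmt_2 (R : Type*) [Ring R] [StarRing R]
    (hproj : ∀ e : R, e * e = e → star e = e)
    (hJclean : ∀ a : R, ∃ e u : R, e * e = e ∧ u ∈ Ideal.jacobson (⊥ : Ideal R) ∧ a = e + u) :
    StronglyJStarClean R := by
  -- key: for any idempotent e and any a, e * a * (1 - e) = 0
  have key : ∀ e a : R, e * e = e → e * a * (1 - e) = 0 := by
    intro e a he
    have hse : star e = e := hproj e he
    have he1 : e * (1 - e) = 0 := by rw [mul_sub, mul_one, he, sub_self]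
    have he2 : (1 - e) * e = 0 := by rw [sub_mul, one_mul, he, sub_self]
    -- f = e + e*a*(1-e) is an idempotent
    have hff : (e + e * a * (1 - e)) * (e + e * a * (1 - e)) = e + e * a * (1 - e) := by
      calc (e + e * a * (1 - e)) * (e + e * a * (1 - e))
          = e * e + e * e * a * (1 - e) + (e * a * ((1 - e) * e)) * (1 + a * (1 - e)) := by
            noncomm_ring
        _ = e + e * a * (1 - e) := by rw [he, he2]; simp
    have hsf := hproj _ hff
    have hstar : star (e + e * a * (1 - e)) = e + (1 - e) * star a * e := by
      simp [star_sub, star_mul, hse, mul_assoc]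
    have h2 : e * a * (1 - e) = (1 - e) * star a * e := by
      have h := hstar.symm.trans hsf
      exact (add_left_cancel h).symm
    calc e * a * (1 - e) = (e * e) * a * (1 - e) := by rw [he]
      _ = e * (e * a * (1 - e)) := by noncomm_ring
      _ = e * ((1 - e) * star a * e) := by rw [h2]
      _ = (e * (1 - e)) * (star a * e) := by noncomm_ring
      _ = 0 := by rw [he1]; simp
  -- every idempotent is central
  have central : ∀ e a : R, e * e = e → e * a = a * e := by
    intro e a he
    have hse : star e = e := hproj e he
    have k1 := key e a he
    have k2 : (1 - e) * a * e = 0 := by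
      have h := key e (star a) he
      calc (1 - e) * a * e = star (e * star a * (1 - e)) := by
            simp [star_mul, star_sub, hse, mul_assoc]
        _ = star (0 : R) := by rw [h]
        _ = 0 := star_zero R
    have hl : e * a = e * a * e := by
      have h : e * a - e * a * e = 0 := by
        calc e * a - e * a * e = e * a * (1 - e) := by noncomm_ring
          _ = 0 := k1
      exact sub_eq_zero.mp h
    have hr : a * e = e * a * e := by
      have h : a * e - e * a * e = 0 := by
        calc a * e - e * a * e = (1 - e) * a * e := by noncomm_ring
          _ = 0 := k2
      exact sub_eq_zero.mp h
    rw [hl, hr]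
  intro a
  obtain ⟨e, u, he, hu, hau⟩ := hJclean a
  exact ⟨e, u, he, hproj e he, hu, hau, (central e a he).symm⟩
end

section
/- Let R be a *-ring in which every idempotent is a projection. Then every idempotent of R is central. -/
/-! For an idempotent `e` and any `x`, the element `e + e x (1 - e)` is again idempotent. If it is
self-adjoint, then so is `a = e x (1 - e)`, whence `a = e a = e a* = e (1 - e) x* e = 0`, i.e.
`e x = e x e`. Applying this to the idempotent `1 - e` as well gives `x e = e x e`. -/

namespace IsIdempotentElem

variable {R : Type*} [Ring R] {e : R}

theorem add_mul_mul_one_sub (he : IsIdempotentElem e) (x : R) :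
    IsIdempotentElem (e + e * x * (1 - e)) := by
  have left : e * (e * x * (1 - e)) = e * x * (1 - e) := by
    rw [← mul_assoc, ← mul_assoc, he.eq]
  have right : e * x * (1 - e) * e = 0 := by
    rw [mul_assoc, he.one_sub_mul_self, mul_zero]
  have square : e * x * (1 - e) * (e * x * (1 - e)) = 0 :=
    calc e * x * (1 - e) * (e * x * (1 - e)) = e * x * (1 - e) * (e * (e * x * (1 - e))) := by
          rw [left]
      _ = 0 := by rw [← mul_assoc, right, zero_mul]
  rw [IsIdempotentElem, add_mul, mul_add, mul_add, he.eq, left, right, square, add_zero, add_zero]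

theorem commute_of_mul_mul_one_sub_eq_zero {x : R} (h₁ : e * x * (1 - e) = 0)
    (h₂ : (1 - e) * x * e = 0) : Commute e x := by
  have key : e * x - x * e = e * x * (1 - e) - (1 - e) * x * e := by noncomm_ring
  rwa [h₁, h₂, sub_zero, sub_eq_zero] at key

end IsIdempotentElem

theorem IsStarProjection.mul_mul_one_sub_eq_zero {R : Type*} [Ring R] [StarRing R] {e : R}
    (he : IsStarProjection e) {x : R} (h : IsSelfAdjoint (e * x * (1 - e))) :
    e * x * (1 - e) = 0 :=
  calc e * x * (1 - e) = e * (e * x * (1 - e)) := by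
        rw [← mul_assoc, ← mul_assoc, he.isIdempotentElem.eq]
    _ = e * ((1 - e) * star x * e) := by
        rw [← h.star_eq, star_mul, star_mul, star_sub, star_one, he.isSelfAdjoint.star_eq,
          mul_assoc]
    _ = 0 := by rw [← mul_assoc, ← mul_assoc, he.mul_one_sub_self, zero_mul, zero_mul]

theorem IsIdempotentElem.mul_mul_one_sub_eq_zero_of_forall {R : Type*} [Ring R] [StarRing R]
    (hproj : ∀ f : R, IsIdempotentElem f → IsSelfAdjoint f) {e : R} (he : IsIdempotentElem e)
    (x : R) : e * x * (1 - e) = 0 := by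
  have hsum : IsSelfAdjoint (e + e * x * (1 - e)) := hproj _ (he.add_mul_mul_one_sub x)
  have hcorner : IsSelfAdjoint (e * x * (1 - e)) := by
    simpa using hsum.sub (hproj e he)
  exact IsStarProjection.mul_mul_one_sub_eq_zero ⟨he, hproj e he⟩ hcorner

theorem stmt_3 (R : Type*) [Ring R] [StarRing R]
    (hproj : ∀ e : R, e * e = e → star e = e) :
    ∀ e : R, e * e = e → ∀ x : R, e * x = x * e := by
  intro e he x
  have corner : ∀ {f : R}, IsIdempotentElem f → ∀ y, f * y * (1 - f) = 0 :=
    IsIdempotentElem.mul_mul_one_sub_eq_zero_of_forall hproj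
  refine IsIdempotentElem.commute_of_mul_mul_one_sub_eq_zero (corner he x) ?_
  simpa using corner (IsIdempotentElem.one_sub he) x
end

section
/- Let R be a strongly J-*-clean ring. Then the quotient ring R/J(R) is Boolean, i.e., every element of R/J(R) is idempotent. -/
/-- If R is strongly J-*-clean then R/J(R) is Boolean, i.e. every element of R is
idempotent modulo the Jacobson radical. -/
theorem stmt_4 (R : Type*) [Ring R] [StarRing R] (h : StronglyJStarClean R) :
    ∀ x : R, x * x - x ∈ Ideal.jacobson (⊥ : Ideal R) := by
  intro x
  obtain ⟨e, u, he, -, hu, hx, hc⟩ := h x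
  have hcomm : u * e = e * u := by
    have := hc
    rw [hx] at this
    have h2 : e * e + u * e = e * e + e * u := by
      rw [add_mul, mul_add] at this; linear_combination (norm := noncomm_ring) this
    exact add_left_cancel h2
  have key : x * x - x = e * u + e * u + u * u - u := by
    subst hx
    have : (e + u) * (e + u) - (e + u)
        = e * e - e + (u * e - e * u) + (e * u + e * u + u * u - u) := by noncomm_ring
    rw [this, he, hcomm]
    noncomm_ring
  rw [key]
  set J := Ideal.jacobson (⊥ : Ideal R)
  exact J.sub_mem (J.add_mem (J.add_mem (J.mul_mem_left e hu) (J.mul_mem_left e hu))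
    (J.mul_mem_left u hu)) hu
end

section
/- Let R be a *-ring that is strongly *-clean and such that R/J(R) is Boolean. Then R is strongly J-*-clean. -/
theorem stmt_5 (R : Type*) [Ring R] [StarRing R]
    (hsc : ∀ a : R, ∃ e v : R, e * e = e ∧ star e = e ∧ IsUnit v ∧ a = e + v ∧ a * e = e * a)
    (hbool : ∀ x : R, x * x - x ∈ Ideal.jacobson (⊥ : Ideal R)) :
    StronglyJStarClean R := by
  intro a
  obtain ⟨e, v, he, hse, hv, hav, hcomm⟩ := hsc (a - 1)
  -- 2 ∈ J
  have h2 : (2 : R) ∈ Ideal.jacobson (⊥ : Ideal R) := by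
    have := hbool (1 + 1)
    have h : ((1:R) + 1) * (1 + 1) - (1 + 1) = 2 := by norm_num
    rwa [h] at this
  -- v - 1 ∈ J
  have hv1 : v - 1 ∈ Ideal.jacobson (⊥ : Ideal R) := by
    have hm : (↑hv.unit⁻¹ : R) * (v * v - v) ∈ Ideal.jacobson (⊥ : Ideal R) :=
      Ideal.mul_mem_left _ _ (hbool v)
    have h : (↑hv.unit⁻¹ : R) * (v * v - v) = v - 1 := by
      rw [mul_sub, ← mul_assoc, hv.val_inv_mul, one_mul]
    rwa [h] at hm
  refine ⟨e, v + 1, he, hse, ?_, ?_, ?_⟩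
  · have : v + 1 = (v - 1) + 2 := by rw [sub_add, show (1:R) - 2 = -1 by norm_num, sub_neg_eq_add]
    rw [this]
    exact add_mem hv1 h2
  · have := sub_eq_iff_eq_add.mp hav
    rw [this, add_assoc]
  · have h : a * e - e = e * a - e := by
      simpa [sub_mul, mul_sub, one_mul, mul_one] using hcomm
    exact sub_left_inj.mp h
end

section
/- Let R be a strongly J-*-clean ring. Then 2 ∈ J(R). -/
theorem stmt_6 (R : Type*) [Ring R] [StarRing R] (h : StronglyJStarClean R) :
    (2 : R) ∈ Ideal.jacobson (⊥ : Ideal R) := by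
  obtain ⟨e, u, he, -, hu, ha, -⟩ := h (-1)
  have hE : e = -1 - u := by rw [ha]; abel
  have h' : (-1 - u) * (-1 - u) = -1 - u := hE ▸ he
  have key : (2 : R) = -(3 * u + u * u) := by
    have h2 : (-1 - u) * (-1 - u) - (-1 - u) = 0 := by rw [h']; exact sub_self _
    have h3 : (2 : R) + (3 * u + u * u) = (-1 - u) * (-1 - u) - (-1 - u) := by
      noncomm_ring
      simp [zsmul_eq_mul, nsmul_eq_mul]
      noncomm_ring
    have h4 : (2 : R) + (3 * u + u * u) = 0 := by rw [h3, h2]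
    exact eq_neg_of_add_eq_zero_left h4
  rw [key]
  exact neg_mem (add_mem (Ideal.mul_mem_left _ _ hu) (Ideal.mul_mem_left _ _ hu))
end

section
/- Let R be a strongly J-*-clean ring. Then for any a ∈ R, a + a* ∈ J(R). -/
/-!
Decomposing `-1 = f + v` makes the idempotent `f = -(1 + v)` a unit, so `f = 1` and
`2 = -v ∈ J(R)`. For `a = e + u` one then has `a + a* = 2e + (u + u*)`, and `J(R)` is closed
under `*` because `star (1 + u y*) = 1 + y u*`.
-/

namespace Ideal

variable {R : Type*} [Ring R]

theorem isUnit_add_one_of_mem_jacobson_bot {u : R} (hu : u ∈ jacobson (⊥ : Ideal R)) :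
    IsUnit (u + 1) := by
  have left_inv : ∀ x ∈ jacobson (⊥ : Ideal R), ∃ z : R, z * (x + 1) = 1 := fun x hx => by
    obtain ⟨z, hz⟩ := mem_jacobson_iff.1 hx 1
    rw [mem_bot, mul_one, sub_eq_zero] at hz
    exact ⟨z, by rw [mul_add, mul_one, hz]⟩
  obtain ⟨z, hz⟩ := left_inv u hu
  -- `z = -(z u) + 1` with `-(z u) ∈ J`, so `z` is left invertible as well
  obtain ⟨w, hw⟩ := left_inv _ (neg_mem (mul_mem_left _ z hu))
  have hz_eq : -(z * u) + 1 = z := by rw [← hz]; noncomm_ring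
  rw [hz_eq] at hw
  have hw_eq : w = u + 1 := left_inv_eq_right_inv hw hz
  exact ⟨⟨u + 1, z, hw_eq ▸ hw, hz⟩, rfl⟩

theorem mem_jacobson_bot_of_forall_isUnit {x : R} (h : ∀ y, IsUnit (y * x + 1)) :
    x ∈ jacobson (⊥ : Ideal R) := by
  refine mem_jacobson_iff.2 fun y => ?_
  obtain ⟨z, hz⟩ := (h y).exists_left_inv
  exact ⟨z, by rw [mem_bot, sub_eq_zero, mul_assoc, ← hz, mul_add, mul_one]⟩

theorem star_mem_jacobson_bot [StarRing R] {u : R} (hu : u ∈ jacobson (⊥ : Ideal R)) :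
    star u ∈ jacobson (⊥ : Ideal R) :=
  mem_jacobson_bot_of_forall_isUnit fun y => by
    simpa using (isUnit_add_one_of_mem_jacobson_bot (mul_mem_right (star y) _ hu)).star

end Ideal

theorem StronglyJStarClean.two_mem_jacobson_bot {R : Type*} [Ring R] [StarRing R]
    (h : StronglyJStarClean R) : (2 : R) ∈ Ideal.jacobson (⊥ : Ideal R) := by
  obtain ⟨f, v, hf, -, hv, hfv, -⟩ := h (-1)
  have hf_unit : IsUnit f := by
    rw [show f = -(v + 1) by rw [eq_sub_of_add_eq hfv.symm]; abel]
    exact (Ideal.isUnit_add_one_of_mem_jacobson_bot hv).neg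
  have hf_one : f = 1 := (IsIdempotentElem.iff_eq_one_of_isUnit hf_unit).1 hf
  have hv_eq : v = -2 := by rw [hf_one] at hfv; rw [eq_sub_of_add_eq' hfv.symm]; norm_num
  simpa [hv_eq] using neg_mem hv

theorem stmt_8 (R : Type*) [Ring R] [StarRing R] (h : StronglyJStarClean R) :
    ∀ a : R, a + star a ∈ Ideal.jacobson (⊥ : Ideal R) := by
  intro a
  obtain ⟨e, u, -, he, hu, rfl, -⟩ := h a
  have hsum : e + u + star (e + u) = 2 * e + (u + star u) := by
    rw [star_add, he, two_mul]; abel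
  rw [hsum]
  exact add_mem (Ideal.mul_mem_right e _ h.two_mem_jacobson_bot)
    (add_mem hu (Ideal.star_mem_jacobson_bot hu))
end

section
/- Let R be a *-ring that is uniquely clean (every element is uniquely the sum of an idempotent and a unit) and such that a + a* ∈ J(R) for all a ∈ R. Then every idempotent of R is a projection. -/
private lemma left_inv_one_sub {R : Type*} [Ring R] {x : R}
    (hx : x ∈ Ideal.jacobson (⊥ : Ideal R)) : ∃ z : R, z * (1 - x) = 1 := by
  obtain ⟨z, hz⟩ := Ideal.mem_jacobson_iff.1 (neg_mem hx) 1
  rw [Ideal.mem_bot] at hz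
  refine ⟨z, ?_⟩
  have : z * 1 * -x + z - 1 = z * (1 - x) - 1 := by noncomm_ring
  rw [this] at hz
  exact sub_eq_zero.mp hz

private lemma isUnit_one_sub_jac {R : Type*} [Ring R] {w : R}
    (hw : w ∈ Ideal.jacobson (⊥ : Ideal R)) : IsUnit (1 - w) := by
  obtain ⟨z, hz⟩ := left_inv_one_sub hw
  have hz1 : 1 - z ∈ Ideal.jacobson (⊥ : Ideal R) := by
    have h' : z - z * w = 1 := by rw [← hz]; noncomm_ring
    have : 1 - z = -(z * w) := by rw [← h']; abel
    rw [this]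
    exact neg_mem (Ideal.mul_mem_left _ z hw)
  obtain ⟨u, hu⟩ := left_inv_one_sub hz1
  rw [sub_sub_cancel] at hu
  have huw : u = 1 - w := by
    calc u = u * (z * (1 - w)) := by rw [hz, mul_one]
    _ = (u * z) * (1 - w) := by rw [mul_assoc]
    _ = 1 - w := by rw [hu, one_mul]
  exact ⟨⟨1 - w, z, by rw [← huw]; exact hu, hz⟩, rfl⟩

theorem stmt_9 (R : Type*) [Ring R] [StarRing R]
    (huc : ∀ a : R, ∃! e : R, e * e = e ∧ IsUnit (a - e))
    (hstar : ∀ a : R, a + star a ∈ Ideal.jacobson (⊥ : Ideal R)) :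
    ∀ e : R, e * e = e → star e = e := by
  intro e he
  have hse : star e * star e = star e := by rw [← star_mul, he]
  have h2 : (2 : R) ∈ Ideal.jacobson (⊥ : Ideal R) := by
    have := hstar 1; simpa [one_add_one_eq_two] using this
  have h2e : e * 2 ∈ Ideal.jacobson (⊥ : Ideal R) :=
    Ideal.mul_mem_left _ e h2
  have hw : star e - e ∈ Ideal.jacobson (⊥ : Ideal R) := by
    have heq : star e - e = (e + star e) - e * 2 := by rw [mul_two]; abel
    rw [heq]
    exact sub_mem (hstar e) h2e
  have hu : IsUnit (star e - e - 1) := by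
    have := isUnit_one_sub_jac hw
    have heq : star e - e - 1 = -(1 - (star e - e)) := by abel
    rw [heq]
    exact this.neg
  obtain ⟨f, -, huniq⟩ := huc (star e - 1)
  have h1 : star e = f := huniq (star e) ⟨hse, by simpa using isUnit_one.neg⟩
  have h2' : e = f := huniq e ⟨he, by
    have heq : star e - 1 - e = star e - e - 1 := by abel
    rw [heq]; exact hu⟩
  rw [h1, h2']
end

section
/- Let R be a strongly J-*-clean ring. Then J(R) = { x ∈ R : 1 - x is a unit }. -/
theorem IsUnit.add_mem_jacobson_bot_s13 {R : Type*} [Ring R] {a x : R} (ha : IsUnit a)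
    (hx : x ∈ Ideal.jacobson (⊥ : Ideal R)) : IsUnit (a + x) := by
  have h : a + x = a * (1 + ↑ha.unit⁻¹ * x) := by
    rw [mul_one_add, ← mul_assoc, IsUnit.mul_val_inv, one_mul]
  rw [h]
  exact ha.mul (Ideal.isUnit_one_add_of_mem_jacobson_bot (Ideal.mul_mem_left _ _ hx))

theorem IsIdempotentElem.eq_zero_of_isUnit_one_sub_add_mem_jacobson_bot {R : Type*} [Ring R]
    {e u : R} (he : IsIdempotentElem e) (hu : u ∈ Ideal.jacobson (⊥ : Ideal R))
    (hunit : IsUnit (1 - (e + u))) : e = 0 := by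
  have h_one_sub : IsUnit (1 - e) := by
    simpa only [sub_add_eq_sub_sub, sub_add_cancel] using hunit.add_mem_jacobson_bot_s13 hu
  exact sub_eq_self.mp ((IsIdempotentElem.iff_eq_one_of_isUnit h_one_sub).1 he.one_sub)

theorem stmt_13 (R : Type*) [Ring R] [StarRing R] (h : StronglyJStarClean R) :
    ∀ x : R, x ∈ Ideal.jacobson (⊥ : Ideal R) ↔ IsUnit (1 - x) := by
  intro x
  refine ⟨fun hx ↦ ?_, fun hunit ↦ ?_⟩
  · simpa [sub_eq_add_neg] using isUnit_one.add_mem_jacobson_bot_s13 (neg_mem hx)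
  · obtain ⟨e, u, he, -, hu, rfl, -⟩ := h x
    rw [IsIdempotentElem.eq_zero_of_isUnit_one_sub_add_mem_jacobson_bot he hu hunit, zero_add]
    exact hu
end

section
/- Let R be a *-ring that is strongly *-clean and satisfies J(R) = { x ∈ R : 1 - x is a unit }. Then R is strongly J-*-clean. -/
private lemma jac_sub_unit {R : Type*} [Ring R]
    (hJ : ∀ x : R, x ∈ Ideal.jacobson (⊥ : Ideal R) ↔ IsUnit (1 - x))
    {j v : R} (hj : j ∈ Ideal.jacobson (⊥ : Ideal R)) (hv : IsUnit v) :
    IsUnit (j - v) := by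
  obtain ⟨w, rfl⟩ := hv
  have h1 : ((w⁻¹ : Rˣ) : R) * j ∈ Ideal.jacobson (⊥ : Ideal R) :=
    Ideal.mul_mem_left _ _ hj
  have h2 : IsUnit (1 - ((w⁻¹ : Rˣ) : R) * j) := (hJ _).mp h1
  have key : j - (w : R) = (-(w : R)) * (1 - ((w⁻¹ : Rˣ) : R) * j) := by
    rw [mul_sub, mul_one, neg_mul, ← mul_assoc]
    simp
    abel
  rw [key]
  exact (w.isUnit.neg).mul h2

theorem stmt_14 (R : Type*) [Ring R] [StarRing R]
    (hsc : ∀ a : R, ∃ e v : R, e * e = e ∧ star e = e ∧ IsUnit v ∧ a = e + v ∧ a * e = e * a)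
    (hJ : ∀ x : R, x ∈ Ideal.jacobson (⊥ : Ideal R) ↔ IsUnit (1 - x)) :
    StronglyJStarClean R := by
  intro a
  obtain ⟨e, v, he, hse, hv, hav, hcomm⟩ := hsc a
  refine ⟨1 - e, a - (1 - e), ?_, ?_, ?_, by abel, ?_⟩
  · have h : (1 - e) * (1 - e) = 1 - e - e + e * e := by noncomm_ring
    rw [h, he]; abel
  · simp [star_sub, hse]
  · rw [hJ]
    have h2 : (2 : R) ∈ Ideal.jacobson (⊥ : Ideal R) := by
      rw [hJ]
      have : (1 : R) - 2 = -1 := by norm_num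
      rw [this]
      exact isUnit_one.neg
    have hj : (1 - e) * 2 ∈ Ideal.jacobson (⊥ : Ideal R) :=
      Ideal.mul_mem_left _ _ h2
    have heq : 1 - (a - (1 - e)) = (1 - e) * 2 - v := by
      rw [hav]; noncomm_ring
    rw [heq]
    exact jac_sub_unit hJ hj hv
  · rw [mul_sub, sub_mul, mul_one, one_mul, hcomm]
end

section
/- Let R be a ring with 2 ∈ J(R). Then an element a + bi of R[i] (the ring R[x]/(x²+1)) is a unit if and only if a + b is a unit in R. -/
/-- The ring `R[i] = R[x]/(x²+1)`: elements `a + b i` with `i² = -1`, `i` central. -/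
@[ext]
structure RI (R : Type*) where
  re : R
  im : R

namespace RI
variable {R : Type*} [Ring R]

instance : Add (RI R) := ⟨fun x y => ⟨x.re + y.re, x.im + y.im⟩⟩
instance : Neg (RI R) := ⟨fun x => ⟨-x.re, -x.im⟩⟩
instance : Zero (RI R) := ⟨⟨0, 0⟩⟩
instance : One (RI R) := ⟨⟨1, 0⟩⟩
instance : Mul (RI R) :=
  ⟨fun x y => ⟨x.re * y.re - x.im * y.im, x.re * y.im + x.im * y.re⟩⟩

@[simp] theorem add_re (x y : RI R) : (x + y).re = x.re + y.re := rfl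
@[simp] theorem add_im (x y : RI R) : (x + y).im = x.im + y.im := rfl
@[simp] theorem neg_re (x : RI R) : (-x).re = -x.re := rfl
@[simp] theorem neg_im (x : RI R) : (-x).im = -x.im := rfl
@[simp] theorem zero_re : (0 : RI R).re = 0 := rfl
@[simp] theorem zero_im : (0 : RI R).im = 0 := rfl
@[simp] theorem one_re : (1 : RI R).re = 1 := rfl
@[simp] theorem one_im : (1 : RI R).im = 0 := rfl
@[simp] theorem mul_re (x y : RI R) : (x * y).re = x.re * y.re - x.im * y.im := rfl
@[simp] theorem mul_im (x y : RI R) : (x * y).im = x.re * y.im + x.im * y.re := rfl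

instance : Ring (RI R) where
  add := (· + ·)
  add_assoc a b c := by ext <;> simp [add_assoc]
  zero_add a := by ext <;> simp
  add_zero a := by ext <;> simp
  add_comm a b := by ext <;> simp [add_comm]
  neg_add_cancel a := by ext <;> simp
  nsmul := nsmulRec
  zsmul := zsmulRec
  mul := (· * ·)
  left_distrib a b c := by ext <;> simp <;> noncomm_ring
  right_distrib a b c := by ext <;> simp <;> noncomm_ring
  zero_mul a := by ext <;> simp
  mul_zero a := by ext <;> simp
  mul_assoc a b c := by ext <;> simp <;> noncomm_ring
  one_mul a := by ext <;> simp
  mul_one a := by ext <;> simp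

end RI

/-- In any monoid, if `x*y` and `y*x` are units then so is `x`. -/
lemma isUnit_of_mul_isUnit_both {S : Type*} [Monoid S] (x y : S)
    (h1 : IsUnit (x * y)) (h2 : IsUnit (y * x)) : IsUnit x := by
  obtain ⟨u, hu⟩ := h1
  obtain ⟨v, hv⟩ := h2
  have hr : x * (y * ↑u⁻¹) = 1 := by rw [← mul_assoc, ← hu, Units.mul_inv]
  have hl : (↑v⁻¹ * y) * x = 1 := by rw [mul_assoc, ← hv, Units.inv_mul]
  have hab : (↑v⁻¹ * y : S) = y * ↑u⁻¹ := by
    calc (↑v⁻¹ * y : S) = (↑v⁻¹ * y) * (x * (y * ↑u⁻¹)) := by rw [hr, mul_one]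
    _ = ((↑v⁻¹ * y) * x) * (y * ↑u⁻¹) := by simp only [mul_assoc]
    _ = y * ↑u⁻¹ := by rw [hl, one_mul]
  exact ⟨⟨x, y * ↑u⁻¹, hr, hab ▸ hl⟩, rfl⟩

/-- Noncommutative version of `Ideal.mem_jacobson_bot` (one direction). -/
lemma jac_isUnit {R : Type*} [Ring R] {x : R}
    (hx : x ∈ Ideal.jacobson (⊥ : Ideal R)) (y : R) : IsUnit (y * x + 1) := by
  have H := Ideal.mem_jacobson_iff.1 hx
  obtain ⟨z, hz⟩ := H y
  rw [Ideal.mem_bot, sub_eq_zero] at hz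
  have hz1 : z * (y * x + 1) = 1 := by rw [mul_add, mul_one, ← mul_assoc]; exact hz
  obtain ⟨w, hw⟩ := H (-z * y)
  rw [Ideal.mem_bot, sub_eq_zero] at hw
  have hzeq : -z * y * x + 1 = z := by
    rw [neg_mul, neg_mul, neg_add_eq_sub]
    exact (eq_sub_of_add_eq' hz).symm
  have hw1 : w * z = 1 := by
    rw [← hzeq, mul_add, mul_one, ← mul_assoc, ← mul_assoc]
    rw [← mul_assoc] at hw
    exact hw
  have heq : y * x + 1 = w := by
    calc y * x + 1 = (w * z) * (y * x + 1) := by rw [hw1, one_mul]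
    _ = w * (z * (y * x + 1)) := by rw [mul_assoc]
    _ = w := by rw [hz1, mul_one]
  exact ⟨⟨y * x + 1, z, by rw [heq]; exact hw1, hz1⟩, rfl⟩

lemma RI.isUnit_scalar {R : Type*} [Ring R] {r : R} (h : IsUnit r) :
    IsUnit (⟨r, 0⟩ : RI R) := by
  obtain ⟨v, rfl⟩ := h
  refine ⟨⟨⟨↑v, 0⟩, ⟨↑v⁻¹, 0⟩, ?_, ?_⟩, rfl⟩ <;> ext <;> simp

theorem stmt_16 (R : Type*) [Ring R]
    (h2 : (2 : R) ∈ Ideal.jacobson (⊥ : Ideal R)) :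
    ∀ a b : R, IsUnit (⟨a, b⟩ : RI R) ↔ IsUnit (a + b) := by
  have key : ∀ r : R, IsUnit (2 * r + 1) := by
    intro r
    have := jac_isUnit h2 r
    rwa [mul_two, ← two_mul] at this
  intro a b
  constructor
  · rintro ⟨u, hu⟩
    set c := (↑u⁻¹ : RI R).re with hc
    set d := (↑u⁻¹ : RI R).im with hd
    have hmi : (⟨a, b⟩ : RI R) * ↑u⁻¹ = 1 := by rw [← hu, Units.mul_inv]
    have hil : (↑u⁻¹ : RI R) * ⟨a, b⟩ = 1 := by rw [← hu, Units.inv_mul]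
    have e1 : a * c - b * d = 1 := by
      have := congrArg RI.re hmi; simpa using this
    have e2 : a * d + b * c = 0 := by
      have := congrArg RI.im hmi; simpa using this
    have e3 : c * a - d * b = 1 := by
      have := congrArg RI.re hil; simpa using this
    have e4 : c * b + d * a = 0 := by
      have := congrArg RI.im hil; simpa using this
    refine isUnit_of_mul_isUnit_both (a + b) (c + d) ?_ ?_
    · have hcalc : (a + b) * (c + d) = (a * c - b * d) + (a * d + b * c) + (2 * (b * d) + 0) := by noncomm_ring
      rw [hcalc, e1, e2]
      simpa [add_comm] using key (b * d)
    · have hcalc : (c + d) * (a + b) = (c * a - d * b) + (c * b + d * a) + (2 * (d * b) + 0) := by noncomm_ring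
      rw [hcalc, e3, e4]
      simpa [add_comm] using key (d * b)
  · rintro ⟨u, hu⟩
    set w : R := ↑u⁻¹ * b with hw
    set d : R := 2 * (w * w) with hdd
    have hd : IsUnit ((⟨1, d⟩ : RI R)) := by
      have h1 : (⟨1, d⟩ : RI R) * ⟨1, -d⟩ = ⟨1 + d * d, 0⟩ := by ext <;> simp
      have h2 : (⟨1, -d⟩ : RI R) * ⟨1, d⟩ = ⟨1 + d * d, 0⟩ := by ext <;> simp
      have hsc : IsUnit ((⟨1 + d * d, 0⟩ : RI R)) := by
        apply RI.isUnit_scalar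
        have : 1 + d * d = 2 * (w * w * d) + 1 := by rw [hdd]; noncomm_ring
        rw [this]; exact key _
      exact isUnit_of_mul_isUnit_both _ _ (h1 ▸ hsc) (h2 ▸ hsc)
    have hs : IsUnit ((⟨1 - w, w⟩ : RI R)) := by
      have h1 : (⟨1 - w, w⟩ : RI R) * ⟨1 + w, -w⟩ = ⟨1, d⟩ := by
        ext <;> simp [hdd] <;> noncomm_ring
      have h2 : (⟨1 + w, -w⟩ : RI R) * ⟨1 - w, w⟩ = ⟨1, d⟩ := by
        ext <;> simp [hdd] <;> noncomm_ring
      exact isUnit_of_mul_isUnit_both _ _ (h1 ▸ hd) (h2 ▸ hd)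
    have hfact : (⟨a, b⟩ : RI R) = ⟨(↑u : R), 0⟩ * ⟨1 - w, w⟩ := by
      have hub : (↑u : R) * w = b := by
        rw [hw, ← mul_assoc, Units.mul_inv, one_mul]
      ext
      · simp only [RI.mul_re, zero_mul, sub_zero]
        rw [mul_sub, mul_one, hub, hu, add_sub_cancel_right]
      · simp only [RI.mul_im, zero_mul, add_zero]
        rw [hub]
    rw [hfact]
    exact (RI.isUnit_scalar u.isUnit).mul hs
end

section
/- Let R be a *-ring. If the ring R[i] = R[x]/(x²+1), equipped with the involution (a+bi)* = a* + b* i, is strongly J-*-clean, then R is strongly J-*-clean. -/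
namespace RI
variable {R : Type*} [Ring R] [StarRing R]

instance : StarRing (RI R) where
  star x := ⟨star x.re, star x.im⟩
  star_involutive x := by ext <;> simp
  star_mul x y := by ext <;> simp [add_comm]
  star_add x y := by ext <;> simp

@[simp] theorem star_re (x : RI R) : (star x).re = star x.re := rfl
@[simp] theorem star_im (x : RI R) : (star x).im = star x.im := rfl

end RI

theorem RI_sub_re {R : Type*} [Ring R] (x y : RI R) : (x - y).re = x.re - y.re := by
  rw [sub_eq_add_neg, sub_eq_add_neg, RI.add_re, RI.neg_re]

theorem RI_sub_im {R : Type*} [Ring R] (x y : RI R) : (x - y).im = x.im - y.im := by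
  rw [sub_eq_add_neg, sub_eq_add_neg, RI.add_im, RI.neg_im]

section Aux

variable {S : Type*} [Ring S]

theorem jac_cancel {w : S} (hw : w ∈ Ideal.jacobson (⊥ : Ideal S))
    (h3 : w * (w * w) = w) : w = 0 := by
  obtain ⟨z, hz⟩ := Ideal.mem_jacobson_iff.mp hw (-w)
  rw [Ideal.mem_bot, sub_eq_zero] at hz
  calc w = (z * -w * w + z) * w := by rw [hz, one_mul]
    _ = z * (w - w * (w * w)) := by noncomm_ring
    _ = 0 := by rw [h3]; simp

theorem idem_eq {f g : S} (hf : f * f = f) (hg : g * g = g) (hc : f * g = g * f)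
    (hw : f - g ∈ Ideal.jacobson (⊥ : Ideal S)) : f = g := by
  have hff : ∀ x : S, f * (f * x) = f * x := fun x => by rw [← mul_assoc, hf]
  have hgg : ∀ x : S, g * (g * x) = g * x := fun x => by rw [← mul_assoc, hg]
  have hgf : ∀ x : S, g * (f * x) = f * (g * x) := fun x => by
    rw [← mul_assoc, ← hc, mul_assoc]
  have hfgf : f * (g * f) = g * f := by rw [← hgf, hf]
  have h3 : (f - g) * ((f - g) * (f - g)) = f - g := by
    simp [mul_sub, sub_mul, hf, hg, hff, hgg, hgf, hfgf, mul_assoc, hc]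
  rw [← sub_eq_zero]
  exact jac_cancel hw h3

variable [StarRing S]

/-- In a strongly J-*-clean ring, every idempotent is a projection. -/
theorem idem_proj (h : StronglyJStarClean S) {f : S} (hf : f * f = f) :
    star f = f := by
  obtain ⟨e, u, he, hse, hu, hfe, hcomm⟩ := h f
  have : f = e := idem_eq hf he hcomm (by rw [hfe]; simpa using hu)
  rw [this, hse]

theorem proj_corner (h : StronglyJStarClean S) {f : S} (hf : f * f = f) (y : S) :
    f * y * (1 - f) = 0 := by
  have hsf : star f = f := idem_proj h hf
  set n := f * y * (1 - f) with hn
  have hfn : f * n = n := by rw [hn, ← mul_assoc, ← mul_assoc, hf]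
  have hnf : n * f = 0 := by
    rw [hn, mul_assoc, sub_mul, one_mul, mul_assoc]
    simp [hf]
  have hidem : (f + n) * (f + n) = f + n := by
    rw [add_mul, mul_add, mul_add, hf, hfn, hnf, zero_add]
    have hnn : n * n = 0 := by
      rw [← hfn, mul_assoc, ← mul_assoc n f n, hnf, zero_mul, mul_zero]
    rw [hnn, add_zero]
  have hproj : star (f + n) = f + n := idem_proj h hidem
  have hsn : star n = n := by
    rw [star_add, hsf] at hproj
    exact add_left_cancel hproj
  have hsn' : star n = (1 - star f) * (star y * star f) := by
    rw [hn]; simp [star_mul, star_sub, mul_assoc]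
  have : n = f * ((1 - star f) * (star y * star f)) := by
    rw [← hsn', hsn, hfn]
  rw [this, ← mul_assoc, mul_sub, mul_one, hsf, hf, sub_self, zero_mul]

/-- In a strongly J-*-clean ring, every idempotent is central. -/
theorem idem_central (h : StronglyJStarClean S) {f : S} (hf : f * f = f)
    (x : S) : f * x = x * f := by
  have h1 := proj_corner h hf x
  have hf' : (1 - f) * (1 - f) = 1 - f := by noncomm_ring [hf]
  have h2 := proj_corner h hf' x
  have h2' : (1 - f) * x * f = 0 := by simpa using h2
  have e1 : f * x * f = f * x := by
    rw [mul_sub, mul_one, sub_eq_zero] at h1; exact h1.symm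
  have e2 : x * f = f * x * f := by
    rw [← sub_eq_zero, ← h2']
    noncomm_ring
  rw [← e1, e2]

end Aux

section Transfer
variable {R : Type*} [Ring R]

theorem jac_re {c : R} (hc : (RI.mk c 0) ∈ Ideal.jacobson (⊥ : Ideal (RI R))) :
    c ∈ Ideal.jacobson (⊥ : Ideal R) := by
  rw [Ideal.mem_jacobson_iff]
  intro y
  obtain ⟨z, hz⟩ := Ideal.mem_jacobson_iff.mp hc (RI.mk y 0)
  rw [Ideal.mem_bot] at hz
  refine ⟨z.re, ?_⟩
  rw [Ideal.mem_bot]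
  have h := congrArg RI.re hz
  simpa [RI_sub_re] using h

end Transfer

theorem stmt_17 (R : Type*) [Ring R] [StarRing R]
    (h : StronglyJStarClean (RI R)) : StronglyJStarClean R := by
  have JJ := Ideal.jacobson (⊥ : Ideal (RI R))
  -- Step 1 : 2 ∈ J(R[i])
  obtain ⟨e0, u0, he0, _, hu0, heq0, hc0⟩ := h (RI.mk 0 1)
  have hcen0 : ∀ x : RI R, RI.mk (0:R) 1 * x = x * RI.mk 0 1 := by
    intro x; ext <;> simp [add_comm]
  have hcomm0 : e0 * u0 = u0 * e0 := by
    have h1 : e0 * (RI.mk 0 1) = (RI.mk 0 1) * e0 := (hcen0 e0).symm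
    have : e0 * (e0 + u0) = (e0 + u0) * e0 := by rw [← heq0, h1]
    rw [mul_add, add_mul, he0] at this
    exact add_left_cancel this
  have hsq : RI.mk (0:R) 1 * RI.mk 0 1 - RI.mk 0 1 = -(1 + RI.mk 0 1) := by
    ext <;> simp [RI_sub_re, RI_sub_im]
  have hmem1 : RI.mk (0:R) 1 * RI.mk 0 1 - RI.mk 0 1 ∈ Ideal.jacobson (⊥ : Ideal (RI R)) := by
    have hexp : RI.mk (0:R) 1 * RI.mk 0 1 - RI.mk 0 1
        = e0 * u0 + e0 * u0 + u0 * u0 - u0 := by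
      rw [heq0]
      linear_combination (norm := noncomm_ring) he0 - hcomm0
    rw [hexp]
    exact Submodule.sub_mem _ (Submodule.add_mem _
      (Submodule.add_mem _ (Ideal.mul_mem_left _ _ hu0) (Ideal.mul_mem_left _ _ hu0))
      (Ideal.mul_mem_left _ _ hu0)) hu0
  have hmem2 : (1 + RI.mk (0:R) 1) ∈ Ideal.jacobson (⊥ : Ideal (RI R)) := by
    have := Submodule.neg_mem _ hmem1
    rw [hsq, neg_neg] at this
    exact this
  have hmem2' : (RI.mk (2:R) 0) ∈ Ideal.jacobson (⊥ : Ideal (RI R)) := by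
    have hfac : RI.mk (2:R) 0 = RI.mk (1:R) (-1) * (1 + RI.mk 0 1) := by
      ext <;> simp <;> norm_num
    rw [hfac]
    exact Ideal.mul_mem_left _ _ hmem2
  have h2R : (2 : R) ∈ Ideal.jacobson (⊥ : Ideal R) := jac_re hmem2'
  -- Step 2 : main decomposition
  intro a
  obtain ⟨e, u, he, hse, hu, heq, hcm⟩ := h (RI.mk a 0)
  set e1 := e.re with he1d
  set e2 := e.im with he2d
  have r1 : e1 * e1 - e2 * e2 = e1 := congrArg RI.re he
  have r2 : e1 * e2 + e2 * e1 = e2 := congrArg RI.im he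
  have s1 : star e1 = e1 := congrArg RI.re hse
  have hcent := idem_central h he (RI.mk e2 0)
  have hc12 : e1 * e2 = e2 * e1 := by
    have := congrArg RI.re hcent
    simpa using this
  have k1 : e1 * e2 + e1 * e2 = e2 := by rw [← hc12] at r2; exact r2
  have he1sq : e1 * e1 = e1 + e2 * e2 := by
    linear_combination (norm := noncomm_ring) r1
  have k3 : e1 * (e1 * e2) = e1 * e2 + e2 * e2 * e2 := by
    rw [← mul_assoc, he1sq, add_mul, mul_assoc]
  have k2 : e1 * (e1 * e2) + e1 * (e1 * e2) = e1 * e2 := by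
    rw [← mul_add, k1]
  rw [k3] at k2
  have key : e2 * e2 * 2 * 2 * e2 + e2 = 0 := by
    linear_combination (norm := noncomm_ring) 2 * k2 - k1
  have h4 : (e2 * e2 * 2 * 2 : R) ∈ Ideal.jacobson (⊥ : Ideal R) :=
    Ideal.mul_mem_left _ _ h2R
  obtain ⟨z, hz⟩ := Ideal.mem_jacobson_iff.mp h4 (1 : R)
  rw [Ideal.mem_bot, sub_eq_zero] at hz
  have hez : e2 = 0 := by
    calc e2 = (z * 1 * (e2 * e2 * 2 * 2) + z) * e2 := by rw [hz, one_mul]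
      _ = z * (e2 * e2 * 2 * 2 * e2 + e2) := by noncomm_ring
      _ = 0 := by rw [key]; simp
  -- assemble the decomposition in R
  have heqre : a = e1 + u.re := congrArg RI.re heq
  have huim : u.im = 0 := by
    have h0 : (0 : R) = e2 + u.im := congrArg RI.im heq
    rw [hez, zero_add] at h0
    exact h0.symm
  have hure : u.re ∈ Ideal.jacobson (⊥ : Ideal R) := by
    apply jac_re
    have : RI.mk u.re 0 = u := RI.ext rfl huim.symm
    rw [this]
    exact hu
  refine ⟨e1, u.re, ?_, s1, hure, heqre, ?_⟩
  · linear_combination (norm := noncomm_ring) r1 + hez * e2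
  · have hre := congrArg RI.re hcm
    simpa using hre
end

section
/- Let R be a *-ring and extend the involution to the power series ring R[[x]] coefficientwise. Then R[[x]] is strongly J-*-clean if and only if R is strongly J-*-clean. -/
open PowerSeries

/-- The coefficientwise involution on `R[[x]]`. -/
noncomputable instance powerSeriesStarRing (R : Type*) [Ring R] [StarRing R] :
    StarRing (PowerSeries R) where
  star f := PowerSeries.mk fun n => star (PowerSeries.coeff n f)
  star_involutive f := by
    ext n
    simp
  star_add f g := by
    ext n
    simp
  star_mul f g := by
    ext n
    simp only [PowerSeries.coeff_mk, PowerSeries.coeff_mul, star_sum, star_mul]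
    exact Finset.sum_nbij' (fun p => (p.2, p.1)) (fun p => (p.2, p.1))
      (by simp [Finset.mem_antidiagonal, add_comm])
      (by simp [Finset.mem_antidiagonal, add_comm])
      (by simp) (by simp) (by simp)

/-!
In a strongly J-*-clean ring every idempotent `a` is a projection: writing `a = e + u`, the
commuting idempotents `a` and `e` differ by an element of the Jacobson radical, which forces
`a = e`. A *-ring in which all idempotents are projections is abelian, so every projection is
central. Since `J(R⟦X⟧)` is the preimage of `J(R)` under `f ↦ f(0)`, a decomposition
`f(0) = e + u` in `R` lifts to `f = C e + (f - C e)` in `R⟦X⟧`, where `C e` commutes with `f`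
because `e` is central; conversely, evaluating at `0` pushes a decomposition of `C a` down to `R`.
-/

namespace IsIdempotentElem

variable {A : Type*} [Ring A]

theorem eq_zero_of_mem_jacobson_bot_s18 {p : A} (hp : IsIdempotentElem p)
    (hJ : p ∈ Ideal.jacobson (⊥ : Ideal A)) : p = 0 := by
  obtain ⟨z, hz⟩ := Ideal.mem_jacobson_iff.1 hJ (-1)
  rw [Ideal.mem_bot, sub_eq_zero] at hz
  have hz_inv : z * (1 - p) = 1 := by
    calc z * (1 - p) = z * -1 * p + z := by noncomm_ring
      _ = 1 := hz
  calc p = z * (1 - p) * p := by rw [hz_inv, one_mul]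
    _ = 0 := by rw [mul_assoc, hp.one_sub_mul_self, mul_zero]

/-- Both `a * (1 - e) = a * (a - e)` and `e * (1 - a) = e * (e - a)` are idempotents lying in
the Jacobson radical, hence vanish. -/
theorem eq_of_commute_of_sub_mem_jacobson_bot_s18 {a e : A} (ha : IsIdempotentElem a)
    (he : IsIdempotentElem e) (hae : Commute a e)
    (hJ : a - e ∈ Ideal.jacobson (⊥ : Ideal A)) : a = e := by
  have h₁ : a * (1 - e) = 0 := by
    refine (ha.mul_of_commute ((Commute.one_right a).sub_right hae) he.one_sub)
      |>.eq_zero_of_mem_jacobson_bot ?_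
    rw [show a * (1 - e) = a * (a - e) by rw [mul_sub, mul_sub, ha.eq, mul_one]]
    exact Ideal.mul_mem_left _ _ hJ
  have h₂ : e * (1 - a) = 0 := by
    refine (he.mul_of_commute ((Commute.one_right e).sub_right hae.symm) ha.one_sub)
      |>.eq_zero_of_mem_jacobson_bot ?_
    rw [show e * (1 - a) = -(e * (a - e)) by rw [mul_sub, mul_sub, he.eq, mul_one, neg_sub]]
    exact neg_mem (Ideal.mul_mem_left _ _ hJ)
  rw [mul_sub, mul_one, sub_eq_zero] at h₁ h₂
  calc a = a * e := h₁
    _ = e * a := hae.eq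
    _ = e := h₂.symm

variable [StarRing A]

/-- For an idempotent `f`, `f + f * r * (1 - f)` is again idempotent; comparing it with its
adjoint `f + (1 - f) * star r * f` shows `f * r * (1 - f) = 0`. -/
theorem mul_mul_one_sub_eq_zero_of_forall_isSelfAdjoint
    (hA : ∀ p : A, IsIdempotentElem p → IsSelfAdjoint p) {f : A} (hf : IsIdempotentElem f)
    (r : A) : f * r * (1 - f) = 0 := by
  have hg : IsIdempotentElem (f + f * r * (1 - f)) := by
    have k₁ : f * r * (1 - f) * f = 0 := by rw [mul_assoc, hf.one_sub_mul_self, mul_zero]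
    have k₂ : f * (f * r * (1 - f)) = f * r * (1 - f) := by
      rw [← mul_assoc, ← mul_assoc, hf.eq]
    have k₃ : f * r * (1 - f) * (f * r * (1 - f)) = 0 := by
      rw [show f * r * (1 - f) * (f * r * (1 - f)) = f * r * (1 - f) * f * (r * (1 - f)) by
        simp only [mul_assoc], k₁, zero_mul]
    simp only [IsIdempotentElem, add_mul, mul_add, hf.eq, k₁, k₂, k₃, add_zero]
  have hstar := (hA _ hg).star_eq
  simp only [star_add, star_mul, star_sub, star_one, (hA f hf).star_eq] at hstar
  have := congrArg (f * ·) hstar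
  simp only [mul_add, ← mul_assoc, hf.eq, hf.mul_one_sub_self, zero_mul, add_zero] at this
  exact add_eq_left.1 this.symm

theorem commute_of_forall_isSelfAdjoint
    (hA : ∀ p : A, IsIdempotentElem p → IsSelfAdjoint p) {f : A} (hf : IsIdempotentElem f)
    (r : A) : Commute f r := by
  have h₁ := mul_mul_one_sub_eq_zero_of_forall_isSelfAdjoint hA hf r
  have h₂ := mul_mul_one_sub_eq_zero_of_forall_isSelfAdjoint hA hf.one_sub r
  rw [sub_sub_cancel, sub_mul, sub_mul, one_mul, sub_eq_zero] at h₂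
  rw [mul_sub, mul_one, sub_eq_zero] at h₁
  exact h₁.trans h₂.symm

end IsIdempotentElem

namespace StronglyJStarClean

variable {A : Type*} [Ring A] [StarRing A]

theorem isSelfAdjoint_of_isIdempotentElem (hA : StronglyJStarClean A) {a : A}
    (ha : IsIdempotentElem a) : IsSelfAdjoint a := by
  obtain ⟨e, u, he, hse, hu, rfl, hcomm⟩ := hA a
  have hu0 : e + u = e :=
    ha.eq_of_commute_of_sub_mem_jacobson_bot_s18 he hcomm (by rwa [add_sub_cancel_left])
  rw [hu0]
  exact hse

theorem commute_of_isIdempotentElem (hA : StronglyJStarClean A) {f : A}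
    (hf : IsIdempotentElem f) (r : A) : Commute f r :=
  hf.commute_of_forall_isSelfAdjoint (fun _ => hA.isSelfAdjoint_of_isIdempotentElem) r

end StronglyJStarClean

namespace PowerSeries

variable {R : Type*} [Ring R]

theorem ker_constantCoeff_le_jacobson_bot :
    RingHom.ker (constantCoeff (R := R)) ≤ Ideal.jacobson ⊥ := by
  intro g hg
  refine Ideal.mem_jacobson_iff.2 fun y => ?_
  obtain ⟨w, hw⟩ : IsUnit (y * g + 1) := by
    rw [isUnit_iff_constantCoeff, map_add, map_mul, RingHom.mem_ker.1 hg, mul_zero, zero_add,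
      map_one]
    exact isUnit_one
  refine ⟨↑w⁻¹, ?_⟩
  rw [Ideal.mem_bot, mul_assoc, ← mul_add_one, ← hw, Units.inv_mul, sub_self]

theorem mem_jacobson_bot_iff {f : R⟦X⟧} :
    f ∈ Ideal.jacobson (⊥ : Ideal R⟦X⟧) ↔
      constantCoeff f ∈ Ideal.jacobson (⊥ : Ideal R) := by
  have hsurj : Function.Surjective (constantCoeff (R := R)) :=
    fun r => ⟨C r, constantCoeff_C r⟩
  have hker : (RingHom.ker (constantCoeff (R := R))).jacobson = Ideal.jacobson ⊥ :=
    le_antisymm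
      ((Ideal.jacobson_mono ker_constantCoeff_le_jacobson_bot).trans_eq Ideal.jacobson_idem)
      (Ideal.jacobson_mono bot_le)
  rw [← Ideal.mem_comap, Ideal.comap_jacobson_of_surjective hsurj, ← RingHom.ker_eq_comap_bot,
    hker]

variable [StarRing R]

theorem coeff_star (n : ℕ) (f : R⟦X⟧) : coeff n (star f) = star (coeff n f) :=
  coeff_mk _ _

theorem constantCoeff_star (f : R⟦X⟧) : constantCoeff (star f) = star (constantCoeff f) := by
  simp only [← coeff_zero_eq_constantCoeff_apply, coeff_star]

theorem star_C (r : R) : star (C r) = C (star r) := by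
  ext n
  rw [coeff_star, coeff_C, coeff_C]
  split_ifs
  · rfl
  · exact star_zero R

end PowerSeries

namespace StronglyJStarClean

variable {R : Type*} [Ring R] [StarRing R]

theorem of_powerSeries (h : StronglyJStarClean R⟦X⟧) : StronglyJStarClean R := by
  intro a
  obtain ⟨E, U, hE, hsE, hU, haEU, hcomm⟩ := h (C a)
  refine ⟨constantCoeff E, constantCoeff U, ?_, ?_, PowerSeries.mem_jacobson_bot_iff.1 hU,
    ?_, ?_⟩
  · rw [← map_mul, hE]
  · rw [← PowerSeries.constantCoeff_star, hsE]
  · simpa using congrArg constantCoeff haEU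
  · simpa using congrArg constantCoeff hcomm

theorem powerSeries (h : StronglyJStarClean R) : StronglyJStarClean R⟦X⟧ := by
  intro f
  obtain ⟨e, u, he, hse, hu, hfe, -⟩ := h (constantCoeff f)
  refine ⟨C e, f - C e, by rw [← map_mul, he], by rw [PowerSeries.star_C, hse], ?_,
    (add_sub_cancel _ _).symm, ?_⟩
  · rwa [PowerSeries.mem_jacobson_bot_iff, map_sub, constantCoeff_C, hfe, add_sub_cancel_left]
  · ext n
    rw [coeff_mul_C, coeff_C_mul]
    exact (h.commute_of_isIdempotentElem he _).eq.symm

end StronglyJStarClean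

theorem stmt_18 (R : Type*) [Ring R] [StarRing R] :
    StronglyJStarClean (PowerSeries R) ↔ StronglyJStarClean R :=
  ⟨.of_powerSeries, .powerSeries⟩
end
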